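/- Let k be a field, let V be a finite-dimensional graded k-vector space with homogeneous basis v₁,…,v_r, each v_i of odd positive degree, and let d be the degree −1 derivation on the tensor algebra T(V) determined by dv₁ = 0, dv₂ = 0 and dv_i = Σ_{j,k} α^i_{jk} v_j ⊗ v_k for i ≥ 3, where the scalars α^i_{jk} ∈ k satisfy α^i_{12} = α^i_{21} = 0 for all i, and assume d∘d = 0. Let (Q,δ) be the complex Q = T(V) ⊕ (T(V) ⊗ s̄V), where s̄V has basis v̄₁,…,v̄_r with |v̄_i| = |v_i| + 1, δ restricted to T(V) equals d, and for a ∈ T(V) homogeneous and v ∈ V with dv = Σ λ_{jk} v_j ⊗ v_k one has δ(a ⊗ v̄) = da ⊗ v̄ + (−1)^{|a|}(a v − (−1)^{|v||a|} v a) + (−1)^{|a|} Σ_{j,k} λ_{jk} a v_j ⊗ v̄_k − Σ_{j,k} λ_{jk} v_k a ⊗ v̄_j. Then for every n ≥ 1 the homology of (Q,δ) in degree n(|v₁|+|v₂|)+1 is nonzero; in particular H_m(Q,δ) ≠ 0 for a strictly increasing sequence of integers m. -/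

import Mathlib

/-!
Write `A` and `B` for the alternating words `v₁v₂⋯v₁` and `v₂v₁⋯v₂` of odd length `2n − 1`.
The element `X_n = A ⊗ v̄₂ − B ⊗ v̄₁` is a cycle: `dA = dB = 0` because `dv₁ = dv₂ = 0`, the
`α`-terms of `δ` vanish because `α¹ = α² = 0`, and the remaining terms cancel since
`A v₂ = v₁ B` and `v₂ A = B v₁`. It is not a boundary: `d` replaces one letter of a word by
two-letter words `v_j v_l` with `α^i_{jl} ≠ 0`, never by `v₁v₂` or `v₂v₁`, so no alternating word
occurs in the image of `d`; the two other terms of `δ` put `A` in the `v̄₂`-component only through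
`α^i_{12}` and `α^i_{21}`. Hence the coefficient of `A` in the `v̄₂`-component vanishes on
boundaries but equals `1` on `X_n`.
-/

noncomputable section

/-- The tensor algebra `T(V)` on a graded vector space `V` with basis `v₀,…,v_{r-1}`,
modelled as the free algebra on `Fin r`. -/
abbrev TV (k : Type) [Field k] (r : ℕ) : Type := FreeAlgebra k (Fin r)

variable (k : Type) [Field k] (r : ℕ)

/-- The degree-`m` homogeneous component of `T(V)`, where the generator `vᵢ` has degree
`deg i`: the span of the words of total degree `m`. -/
def Tgr (deg : Fin r → ℕ) (m : ℕ) : Submodule k (TV k r) :=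
  Submodule.span k {x | ∃ w : List (Fin r), (w.map deg).sum = m ∧
    x = (w.map (FreeAlgebra.ι k)).prod}

/-- The sign involution `a ↦ (−1)^{|a|} a` of `T(V)` (all generators have odd degree),
i.e. the algebra map determined by `vᵢ ↦ −vᵢ`. -/
def sgn : TV k r →ₐ[k] TV k r := FreeAlgebra.lift k (fun i => -(FreeAlgebra.ι k i))

/-- The complex `Q = T(V) ⊕ (T(V) ⊗ s̄V)`, where `T(V) ⊗ s̄V` is encoded as the space of
(finitely many) coordinates `g : Fin r → T(V)`, `g i` being the coefficient of `v̄ᵢ`. -/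
abbrev QC : Type := TV k r × (Fin r → TV k r)

/-- The differential `δ` of the complex `Q`: it restricts to `d` on `T(V)`, and on
`a ⊗ v̄ᵢ` (with `d vᵢ = Σ_{j,l} α i j l · vⱼ ⊗ v_l`) it is given by
`δ(a ⊗ v̄ᵢ) = d a ⊗ v̄ᵢ + ((−1)^{|a|} a vᵢ − vᵢ a)
  + Σ_{j,l} α i j l · ((−1)^{|a|} a vⱼ) ⊗ v̄_l − Σ_{j,l} α i j l · (v_l a) ⊗ v̄ⱼ`,
the sign `(−1)^{|a|}` being implemented by the involution `sgn`. -/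
def deltaQ (d : TV k r →ₗ[k] TV k r) (α : Fin r → Fin r → Fin r → k) :
    QC k r →ₗ[k] QC k r :=
  LinearMap.prod
    (d ∘ₗ LinearMap.fst k (TV k r) (Fin r → TV k r) +
      ∑ i : Fin r,
        (LinearMap.mulRight k (FreeAlgebra.ι k i) ∘ₗ (sgn k r).toLinearMap ∘ₗ
            LinearMap.proj i ∘ₗ LinearMap.snd k (TV k r) (Fin r → TV k r)
         - LinearMap.mulLeft k (FreeAlgebra.ι k i) ∘ₗ
            LinearMap.proj i ∘ₗ LinearMap.snd k (TV k r) (Fin r → TV k r)))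
    (LinearMap.pi fun t =>
      d ∘ₗ LinearMap.proj t ∘ₗ LinearMap.snd k (TV k r) (Fin r → TV k r)
      + ∑ i : Fin r, ∑ j : Fin r, α i j t •
          (LinearMap.mulRight k (FreeAlgebra.ι k j) ∘ₗ (sgn k r).toLinearMap ∘ₗ
            LinearMap.proj i ∘ₗ LinearMap.snd k (TV k r) (Fin r → TV k r))
      - ∑ i : Fin r, ∑ l : Fin r, α i t l •
          (LinearMap.mulLeft k (FreeAlgebra.ι k l) ∘ₗ
            LinearMap.proj i ∘ₗ LinearMap.snd k (TV k r) (Fin r → TV k r)))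

/-- The alternating word `v_s v_t v_s v_t ⋯` of length `len` in `T(V)`. -/
def altWord (s t : Fin r) (len : ℕ) : TV k r :=
  (((List.range len).map fun j => if j % 2 = 0 then s else t).map (FreeAlgebra.ι k)).prod

/-- The cycle `X_n = v₁v₂v₁⋯v₁ ⊗ v̄₂ − v₂v₁v₂⋯v₂ ⊗ v̄₁` (alternating words of length
`2n−1`), an element of `T(V) ⊗ s̄V ⊆ Q`.  Here `v₁, v₂` are the generators of index `0, 1`. -/
def Xcyc (hr : 2 ≤ r) (n : ℕ) : QC k r :=
  (0, fun u =>
    if u = (⟨1, by omega⟩ : Fin r) then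
      altWord k r ⟨0, by omega⟩ ⟨1, by omega⟩ (2 * n - 1)
    else if u = (⟨0, by omega⟩ : Fin r) then
      -(altWord k r ⟨1, by omega⟩ ⟨0, by omega⟩ (2 * n - 1))
    else 0)

/-- The degree-`m` homogeneous component of `Q = T(V) ⊕ (T(V) ⊗ s̄V)`, where `v̄ᵢ` has
degree `deg i + 1`. -/
def Qgr (deg : Fin r → ℕ) (m : ℕ) : Submodule k (QC k r) :=
  Submodule.prod (Tgr k r deg m)
    (Submodule.pi Set.univ fun i =>
      if deg i + 1 ≤ m then Tgr k r deg (m - (deg i + 1)) else ⊥)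

/-- The degree-`m` homology of the complex `(Q, δ)`: cycles of degree `m` modulo the
image under `δ` of the degree-`(m+1)` component. -/
abbrev HQ (deg : Fin r → ℕ) (d : TV k r →ₗ[k] TV k r)
    (α : Fin r → Fin r → Fin r → k) (m : ℕ) : Type :=
  ↥(Qgr k r deg m ⊓ LinearMap.ker (deltaQ k r d α)) ⧸
    Submodule.comap (Qgr k r deg m ⊓ LinearMap.ker (deltaQ k r d α)).subtype
      (Submodule.map (deltaQ k r d α) (Qgr k r deg (m + 1)))

namespace FreeAlgebra

variable {R X : Type*} [CommSemiring R]

theorem basisFreeMonoid_apply (w : FreeMonoid X) :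
    basisFreeMonoid R X w = (w.toList.map (ι R)).prod := by
  simp [basisFreeMonoid, equivMonoidAlgebraFreeMonoid, FreeMonoid.lift_apply]

theorem linearMap_ext_list_prod {M : Type*} [AddCommMonoid M] [Module R M]
    {f g : FreeAlgebra R X →ₗ[R] M}
    (h : ∀ w : List X, f (w.map (ι R)).prod = g (w.map (ι R)).prod) : f = g :=
  (basisFreeMonoid R X).ext fun w => by rw [basisFreeMonoid_apply]; exact h _

def wordCoeff (w : List X) : FreeAlgebra R X →ₗ[R] R :=
  (basisFreeMonoid R X).coord (FreeMonoid.ofList w)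

variable [DecidableEq X]

theorem wordCoeff_list_prod (w ws : List X) :
    wordCoeff w (ws.map (ι R)).prod = if ws = w then 1 else 0 := by
  rw [← FreeMonoid.toList_ofList ws, ← basisFreeMonoid_apply, wordCoeff, Module.Basis.coord_apply,
    Module.Basis.repr_self]
  by_cases h : ws = w
  · simp [h]
  · simp [h, Finsupp.single_eq_of_ne, Ne.symm h]

theorem wordCoeff_nil_ι_mul (i : X) (x : FreeAlgebra R X) :
    wordCoeff [] (ι R i * x) = 0 :=
  LinearMap.congr_fun (f := wordCoeff [] ∘ₗ LinearMap.mulLeft R (ι R i)) (g := 0)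
    (linearMap_ext_list_prod fun ws => by
      rw [LinearMap.comp_apply, LinearMap.mulLeft_apply, ← List.prod_cons, ← List.map_cons,
        wordCoeff_list_prod]
      simp) x

theorem wordCoeff_cons_ι_mul (s i : X) (w : List X) (x : FreeAlgebra R X) :
    wordCoeff (s :: w) (ι R i * x) = if i = s then wordCoeff w x else 0 := by
  have key := linearMap_ext_list_prod (f := wordCoeff (s :: w) ∘ₗ LinearMap.mulLeft R (ι R i))
    (g := if i = s then wordCoeff w else 0) fun ws => by
      rw [LinearMap.comp_apply, LinearMap.mulLeft_apply, ← List.prod_cons, ← List.map_cons,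
        wordCoeff_list_prod]
      split_ifs <;> simp_all [wordCoeff_list_prod]
  have := LinearMap.congr_fun key x
  split_ifs at this ⊢ <;> exact this

theorem wordCoeff_append_mul_ι (s i : X) (w : List X) (x : FreeAlgebra R X) :
    wordCoeff (w ++ [s]) (x * ι R i) = if i = s then wordCoeff w x else 0 := by
  have key := linearMap_ext_list_prod (f := wordCoeff (w ++ [s]) ∘ₗ LinearMap.mulRight R (ι R i))
    (g := if i = s then wordCoeff w else 0) fun ws => by
      rw [LinearMap.comp_apply, LinearMap.mulRight_apply]
      rw [show (ws.map (ι R)).prod * ι R i = ((ws ++ [i]).map (ι R)).prod by simp,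
        wordCoeff_list_prod]
      split_ifs <;> simp_all [wordCoeff_list_prod]
  have := LinearMap.congr_fun key x
  split_ifs at this ⊢ <;> exact this

theorem wordCoeff_cons_cons_ι_mul_ι_mul (s t j l : X) (w : List X) (y : FreeAlgebra R X) :
    wordCoeff (s :: t :: w) (ι R j * ι R l * y) =
      if j = s ∧ l = t then wordCoeff w y else 0 := by
  rw [mul_assoc, wordCoeff_cons_ι_mul, wordCoeff_cons_ι_mul]
  by_cases hj : j = s <;> by_cases hl : l = t <;> simp [hj, hl]

end FreeAlgebra

section AltList

variable {X : Type*}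

def altList (s t : X) (n : ℕ) : List X :=
  (List.range n).map fun j => if j % 2 = 0 then s else t

theorem altList_succ (s t : X) (n : ℕ) : altList s t (n + 1) = s :: altList t s n := by
  simp only [altList, List.range_succ_eq_map, List.map_cons, List.map_map, Nat.zero_mod,
    if_true, List.cons.injEq, true_and]
  refine List.map_congr_left fun j _ => ?_
  rcases Nat.mod_two_eq_zero_or_one j with h | h <;> simp [h, Nat.succ_mod_two_eq_zero_iff]

theorem altList_succ' (s t : X) (n : ℕ) :
    altList s t (n + 1) = altList s t n ++ [if n % 2 = 0 then s else t] := by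
  simp [altList, List.range_succ]

theorem eq_or_eq_of_mem_altList {s t x : X} {n : ℕ} (h : x ∈ altList s t n) :
    x = s ∨ x = t := by
  obtain ⟨j, -, rfl⟩ := List.mem_map.mp h
  split_ifs <;> simp

theorem altList_two_mul_add_one (s t : X) (p : ℕ) :
    altList s t (2 * p + 1) = altList s t (2 * p) ++ [s] := by
  rw [altList_succ', if_pos (by omega)]

theorem altList_two_mul_add_one_append (s t : X) (p : ℕ) :
    altList s t (2 * p + 1) ++ [t] = s :: altList t s (2 * p + 1) := by
  rw [← altList_succ, altList_succ' s t (2 * p + 1), if_neg (by omega)]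

theorem length_altList (s t : X) (n : ℕ) : (altList s t n).length = n := by
  simp [altList]

theorem sum_map_altList_two_mul_add_one {M : Type*} [AddCommMonoid M] (f : X → M)
    (s t : X) (p : ℕ) :
    ((altList s t (2 * p + 1)).map f).sum = (p + 1) • f s + p • f t := by
  induction p with
  | zero => simp [altList]
  | succ p ih =>
    rw [show 2 * (p + 1) + 1 = 2 * p + 1 + 1 + 1 by ring, altList_succ, altList_succ,
      List.map_cons, List.map_cons, List.sum_cons, List.sum_cons, ih]
    simp only [succ_nsmul]
    abel

end AltList

namespace FreeAlgebra

variable {R X : Type*} [CommRing R] {d : FreeAlgebra R X →ₗ[R] FreeAlgebra R X}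

theorem map_list_prod_eq_zero_of_odd_derivation (hone : d 1 = 0)
    (hmul : ∀ i y, d (ι R i * y) = d (ι R i) * y - ι R i * d y) {L : List X}
    (hL : ∀ x ∈ L, d (ι R x) = 0) : d (L.map (ι R)).prod = 0 := by
  induction L with
  | nil => simpa using hone
  | cons a L ih =>
    rw [List.map_cons, List.prod_cons, hmul, hL a List.mem_cons_self,
      ih fun x hx => hL x (List.mem_cons_of_mem a hx), zero_mul, mul_zero, sub_zero]

theorem wordCoeff_altList_map_eq_zero_of_odd_derivation [Fintype X] [DecidableEq X] (hone : d 1 = 0)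
    (hmul : ∀ i y, d (ι R i * y) = d (ι R i) * y - ι R i * d y) (α : X → X → X → R)
    (hgen : ∀ i, d (ι R i) = ∑ j, ∑ l, α i j l • (ι R j * ι R l)) {s t : X}
    (hst : ∀ i, α i s t = 0) (hts : ∀ i, α i t s = 0) (n : ℕ) (x : FreeAlgebra R X) :
    wordCoeff (altList s t n) (d x) = 0 := by
  suffices h : ∀ (ws : List X) (s t : X) (n : ℕ), (∀ i, α i s t = 0) → (∀ i, α i t s = 0) →
      wordCoeff (altList s t n) (d (ws.map (ι R)).prod) = 0 from
    LinearMap.congr_fun (f := wordCoeff (altList s t n) ∘ₗ d) (g := 0)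
      (linearMap_ext_list_prod fun ws => h ws s t n hst hts) x
  intro ws
  induction ws with
  | nil => simp [hone]
  | cons i ws ih =>
    intro s t n hst hts
    set y := (ws.map (ι R)).prod
    have hquad : ∀ j l, wordCoeff (altList s t n) (α i j l • (ι R j * ι R l) * y) = 0 := by
      intro j l
      rw [smul_mul_assoc, map_smul]
      match n with
      | 0 => simp [altList, mul_assoc, wordCoeff_nil_ι_mul]
      | 1 => simp [altList, mul_assoc, wordCoeff_cons_ι_mul, wordCoeff_nil_ι_mul]
      | n + 2 =>
        rw [altList_succ, altList_succ, wordCoeff_cons_cons_ι_mul_ι_mul]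
        split_ifs with h
        · simp [h.1, h.2, hst]
        · simp
    have htail : wordCoeff (altList s t n) (ι R i * d y) = 0 := by
      cases n with
      | zero => exact wordCoeff_nil_ι_mul i _
      | succ n => simp [altList_succ, wordCoeff_cons_ι_mul, ih t s n hts hst]
    rw [List.map_cons, List.prod_cons, hmul, map_sub, htail, sub_zero, hgen, Finset.sum_mul,
      map_sum]
    refine Finset.sum_eq_zero fun j _ => ?_
    rw [Finset.sum_mul, map_sum]
    exact Finset.sum_eq_zero fun l _ => hquad j l

end FreeAlgebra

section QComplex

variable {k r}

theorem list_prod_mem_Tgr (deg : Fin r → ℕ) (w : List (Fin r)) :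
    (w.map (FreeAlgebra.ι k)).prod ∈ Tgr k r deg (w.map deg).sum :=
  Submodule.subset_span ⟨w, rfl, rfl⟩

variable {deg : Fin r → ℕ} {d : TV k r →ₗ[k] TV k r}

theorem map_one_eq_zero_of_leibniz
    (hLeib : ∀ m : ℕ, ∀ a ∈ Tgr k r deg m, ∀ b : TV k r,
      d (a * b) = d a * b + ((-1 : k) ^ m) • (a * d b)) :
    d 1 = 0 := by
  simpa using hLeib 0 1 (by simpa using list_prod_mem_Tgr (k := k) deg []) 1

theorem map_ι_mul_of_leibniz (hodd : ∀ i, Odd (deg i))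
    (hLeib : ∀ m : ℕ, ∀ a ∈ Tgr k r deg m, ∀ b : TV k r,
      d (a * b) = d a * b + ((-1 : k) ^ m) • (a * d b))
    (i : Fin r) (y : TV k r) :
    d (FreeAlgebra.ι k i * y) = d (FreeAlgebra.ι k i) * y - FreeAlgebra.ι k i * d y := by
  rw [hLeib (deg i) _ (by simpa using list_prod_mem_Tgr (k := k) deg [i]) y,
    (hodd i).neg_one_pow, neg_one_smul, sub_eq_add_neg]

theorem altWord_eq_list_prod (s t : Fin r) (n : ℕ) :
    altWord k r s t n = ((altList s t n).map (FreeAlgebra.ι k)).prod :=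
  rfl

theorem sgn_ι (i : Fin r) : sgn k r (FreeAlgebra.ι k i) = -FreeAlgebra.ι k i :=
  FreeAlgebra.lift_ι_apply _ _

theorem sgn_list_prod (L : List (Fin r)) :
    sgn k r (L.map (FreeAlgebra.ι k)).prod =
      (-1 : k) ^ L.length • (L.map (FreeAlgebra.ι k)).prod := by
  induction L with
  | nil => simp
  | cons a L ih =>
    rw [List.map_cons, List.prod_cons, map_mul, ih, sgn_ι, List.length_cons, pow_succ,
      mul_smul_comm, neg_mul, mul_neg_one, neg_smul, smul_neg]

theorem sgn_altWord_two_mul_add_one (s t : Fin r) (p : ℕ) :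
    sgn k r (altWord k r s t (2 * p + 1)) = -altWord k r s t (2 * p + 1) := by
  rw [altWord_eq_list_prod, sgn_list_prod, length_altList, (odd_two_mul_add_one p).neg_one_pow,
    neg_one_smul]

theorem deltaQ_fst (α : Fin r → Fin r → Fin r → k) (y : QC k r) :
    (deltaQ k r d α y).1 = d y.1 + ∑ i, (sgn k r (y.2 i) * FreeAlgebra.ι k i -
      FreeAlgebra.ι k i * y.2 i) := by
  simp [deltaQ]

theorem deltaQ_snd (α : Fin r → Fin r → Fin r → k) (y : QC k r) (t : Fin r) :
    (deltaQ k r d α y).2 t = d (y.2 t)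
      + ∑ i, ∑ j, α i j t • (sgn k r (y.2 i) * FreeAlgebra.ι k j)
      - ∑ i, ∑ l, α i t l • (FreeAlgebra.ι k l * y.2 i) := by
  simp [deltaQ]

end QComplex

section Cycle

open FreeAlgebra

variable {k r}

def altCycle (s t : Fin r) (n : ℕ) : QC k r :=
  (0, fun u => if u = t then altWord k r s t n else if u = s then -altWord k r t s n else 0)

theorem Xcyc_succ (hr : 2 ≤ r) (p : ℕ) :
    Xcyc k r hr (p + 1) = altCycle ⟨0, by omega⟩ ⟨1, by omega⟩ (2 * p + 1) :=
  rfl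

theorem altWord_mem_Tgr (deg : Fin r → ℕ) (s t : Fin r) (p : ℕ) :
    altWord k r s t (2 * p + 1) ∈ Tgr k r deg ((p + 1) * deg s + p * deg t) := by
  rw [altWord_eq_list_prod]
  simpa [sum_map_altList_two_mul_add_one] using
    list_prod_mem_Tgr (k := k) deg (altList s t (2 * p + 1))

theorem altWord_mul_ι (s t : Fin r) (p : ℕ) :
    altWord k r s t (2 * p + 1) * ι k t = ι k s * altWord k r t s (2 * p + 1) := by
  have h := congrArg (fun L => (L.map (ι k)).prod) (altList_two_mul_add_one_append s t p)
  simpa [altWord_eq_list_prod] using h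

variable {d : TV k r →ₗ[k] TV k r} {α : Fin r → Fin r → Fin r → k} {s t : Fin r}

theorem altCycle_mem_Qgr (deg : Fin r → ℕ) (hst : s ≠ t) (p : ℕ) :
    altCycle (k := k) s t (2 * p + 1) ∈ Qgr k r deg ((p + 1) * (deg s + deg t) + 1) := by
  refine Submodule.mem_prod.mpr ⟨zero_mem _, Submodule.mem_pi.mpr fun u _ => ?_⟩
  rcases eq_or_ne u t with rfl | hut
  · rw [if_pos (by nlinarith)]
    simp only [altCycle, if_true]
    convert altWord_mem_Tgr deg s u p using 2
    exact Nat.sub_eq_of_eq_add (by ring)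
  rcases eq_or_ne u s with rfl | hus
  · rw [if_pos (by nlinarith)]
    simp only [altCycle, if_neg hst, if_true]
    refine neg_mem ?_
    convert altWord_mem_Tgr deg t u p using 2
    exact Nat.sub_eq_of_eq_add (by ring)
  simp only [altCycle, if_neg hut, if_neg hus]
  split_ifs <;> exact zero_mem _

theorem map_altWord_eq_zero (hone : d 1 = 0)
    (hmul : ∀ i y, d (ι k i * y) = d (ι k i) * y - ι k i * d y)
    (hds : d (ι k s) = 0) (hdt : d (ι k t) = 0) (n : ℕ) :
    d (altWord k r s t n) = 0 :=
  FreeAlgebra.map_list_prod_eq_zero_of_odd_derivation hone hmul fun _ hx => by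
    rcases eq_or_eq_of_mem_altList hx with rfl | rfl <;> assumption

theorem deltaQ_altCycle (hone : d 1 = 0)
    (hmul : ∀ i y, d (ι k i * y) = d (ι k i) * y - ι k i * d y)
    (hds : d (ι k s) = 0) (hdt : d (ι k t) = 0)
    (hαs : ∀ j l, α s j l = 0) (hαt : ∀ j l, α t j l = 0) (hst : s ≠ t) (p : ℕ) :
    deltaQ k r d α (altCycle s t (2 * p + 1)) = 0 := by
  have hsupp : ∀ i, i ≠ s ∧ i ≠ t → (altCycle (k := k) s t (2 * p + 1)).2 i = 0 :=
    fun i hi => by simp [altCycle, hi.1, hi.2]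
  have hd : ∀ u, d ((altCycle (k := k) s t (2 * p + 1)).2 u) = 0 := fun u => by
    simp only [altCycle]
    split_ifs <;> simp [map_altWord_eq_zero hone hmul, hds, hdt]
  refine Prod.ext ?_ (funext fun u => ?_)
  · rw [deltaQ_fst, Fintype.sum_eq_add s t hst fun i hi => by simp [hsupp i hi]]
    simp only [altCycle, if_neg hst, if_true, map_neg, sgn_altWord_two_mul_add_one]
    rw [map_zero, neg_neg, neg_mul, mul_neg, ← altWord_mul_ι, altWord_mul_ι t s, Prod.fst_zero]
    abel
  · have hα : ∀ i j l, α i j l • (altCycle (k := k) s t (2 * p + 1)).2 i = 0 := fun i j l => by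
      by_cases his : i = s
      · simp [his, hαs]
      by_cases hit : i = t
      · simp [hit, hαt]
      simp [hsupp i ⟨his, hit⟩]
    have h1 : ∀ i j, α i j u • (sgn k r ((altCycle s t (2 * p + 1)).2 i) * ι k j) = 0 :=
      fun i j => by
      rw [← smul_mul_assoc, ← map_smul, hα, map_zero, zero_mul]
    have h2 : ∀ i l, α i u l • (ι k l * (altCycle s t (2 * p + 1)).2 i) = 0 :=
      fun i l => by rw [← mul_smul_comm, hα, mul_zero]
    simp [deltaQ_snd, hd, h1, h2]

theorem deltaQ_ne_altCycle (hone : d 1 = 0)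
    (hmul : ∀ i y, d (ι k i * y) = d (ι k i) * y - ι k i * d y)
    (hgen : ∀ i, d (ι k i) = ∑ j, ∑ l, α i j l • (ι k j * ι k l))
    (hst : ∀ i, α i s t = 0) (hts : ∀ i, α i t s = 0) (p : ℕ) (y : QC k r) :
    deltaQ k r d α y ≠ altCycle s t (2 * p + 1) := by
  set w := altList s t (2 * p + 1) with hw
  have hright : ∀ i j, wordCoeff w (α i j t • (sgn k r (y.2 i) * ι k j)) = 0 := fun i j => by
    rw [map_smul, hw, altList_two_mul_add_one, wordCoeff_append_mul_ι]
    split_ifs with hj <;> simp [hj, hst]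
  have hleft : ∀ i l, wordCoeff w (α i t l • (ι k l * y.2 i)) = 0 := fun i l => by
    rw [map_smul, hw, altList_succ, wordCoeff_cons_ι_mul]
    split_ifs with hl <;> simp [hl, hts]
  have hboundary : wordCoeff w ((deltaQ k r d α y).2 t) = 0 := by
    simp [deltaQ_snd, wordCoeff_altList_map_eq_zero_of_odd_derivation hone hmul α hgen hst hts,
      hright, hleft, w]
  have hcycle : wordCoeff w ((altCycle (k := k) s t (2 * p + 1)).2 t) = 1 := by
    simp [altCycle, altWord_eq_list_prod, wordCoeff_list_prod, w]
  intro h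
  rw [h, hcycle] at hboundary
  exact one_ne_zero hboundary

end Cycle

theorem Submodule.nontrivial_quotient_comap_subtype {R M : Type*} [Ring R] [AddCommGroup M]
    [Module R M] {Z B : Submodule R M} {x : M} (hxZ : x ∈ Z) (hxB : x ∉ B) :
    Nontrivial (Z ⧸ B.comap Z.subtype) :=
  Submodule.Quotient.nontrivial_iff.mpr fun h => hxB <| by
    simpa using (h ▸ Submodule.mem_top : (⟨x, hxZ⟩ : Z) ∈ B.comap Z.subtype)

/-- **Statement 12.** Let `V` have homogeneous basis `v₁,…,v_r` of odd positive degrees and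
let `d` be the degree `−1` derivation of `T(V)` with `dv₁ = dv₂ = 0` and
`dvᵢ = Σ_{j,l} α^i_{jl} vⱼ ⊗ v_l`, where `α^i_{12} = α^i_{21} = 0` for all `i` and
`d ∘ d = 0`.  Then for every `n ≥ 1` the homology of `(Q, δ)` in degree
`n(|v₁| + |v₂|) + 1` is nonzero; in particular `H_m(Q, δ) ≠ 0` for a strictly increasing
sequence of integers `m`. -/
theorem homology_QC_nonzero
    (k : Type) [Field k] (r : ℕ) (hr : 2 ≤ r)
    (deg : Fin r → ℕ) (hodd : ∀ i, Odd (deg i))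
    (d : TV k r →ₗ[k] TV k r) (α : Fin r → Fin r → Fin r → k)
    (hα1 : ∀ j l, α ⟨0, by omega⟩ j l = 0)
    (hα2 : ∀ j l, α ⟨1, by omega⟩ j l = 0)
    (hα12 : ∀ i, α i ⟨0, by omega⟩ ⟨1, by omega⟩ = 0)
    (hα21 : ∀ i, α i ⟨1, by omega⟩ ⟨0, by omega⟩ = 0)
    (hgen : ∀ i, d (FreeAlgebra.ι k i) =
      ∑ j : Fin r, ∑ l : Fin r, α i j l • (FreeAlgebra.ι k j * FreeAlgebra.ι k l))
    (hLeib : ∀ m : ℕ, ∀ a ∈ Tgr k r deg m, ∀ b : TV k r,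
      d (a * b) = d a * b + ((-1 : k) ^ m) • (a * d b)) :
    (∀ n : ℕ, 1 ≤ n →
      Nontrivial (HQ k r deg d α
        (n * (deg (⟨0, by omega⟩ : Fin r) + deg (⟨1, by omega⟩ : Fin r)) + 1))) ∧
    ∃ s : ℕ → ℕ, StrictMono s ∧ ∀ i : ℕ, Nontrivial (HQ k r deg d α (s i)) := by
  have hone := map_one_eq_zero_of_leibniz hLeib
  have hmul := map_ι_mul_of_leibniz hodd hLeib
  have hne : (⟨0, by omega⟩ : Fin r) ≠ ⟨1, by omega⟩ := by simp
  have key : ∀ p : ℕ, Nontrivial (HQ k r deg d α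
      ((p + 1) * (deg (⟨0, by omega⟩ : Fin r) + deg (⟨1, by omega⟩ : Fin r)) + 1)) := by
    intro p
    have hX := Xcyc_succ (k := k) hr p
    refine Submodule.nontrivial_quotient_comap_subtype (x := Xcyc k r hr (p + 1)) ⟨?_, ?_⟩ ?_
    · rw [hX]
      exact altCycle_mem_Qgr deg hne p
    · rw [hX]
      exact deltaQ_altCycle hone hmul (by simp [hgen, hα1]) (by simp [hgen, hα2]) hα1 hα2 hne p
    · rintro ⟨y, -, hy⟩
      exact deltaQ_ne_altCycle hone hmul hgen hα12 hα21 p y (hy.trans hX)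
  refine ⟨fun n hn => ?_, fun p => (p + 1) * (deg ⟨0, by omega⟩ + deg ⟨1, by omega⟩) + 1,
    strictMono_nat_of_lt_succ fun p => ?_, key⟩
  · obtain ⟨p, rfl⟩ := Nat.exists_eq_add_of_le' hn
    exact key p
  · have := (hodd ⟨0, by omega⟩).pos
    nlinarith
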